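/- arXiv:1706.02998 — 2 statements merged into one kernel-verified Lean document; each statement's English description precedes it below -/
import Mathlib

section
/- The pseudospin expectation is periodic with period π/2 in every angle: for all γ, β ∈ ℝ^p, all integer vectors l, l′ ∈ ℤ^p, and all θ ∈ ℝ, F(γ + (π/2)·l, β + (π/2)·l′, θ) = F(γ, β, θ), where addition is componentwise. -/
open Matrix Complex Real

noncomputable section

def σx : Matrix (Fin 2) (Fin 2) ℂ := !![0, 1; 1, 0]

def σz : Matrix (Fin 2) (Fin 2) ℂ := !![1, 0; 0, -1]

/-- The Bloch axis `n(θ) = cos θ · σz + sin θ · σx`. -/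
def nvec (θ : ℝ) : Matrix (Fin 2) (Fin 2) ℂ :=
  (Real.cos θ : ℂ) • σz + (Real.sin θ : ℂ) • σx

/-- `U_B(β) = exp(−2iβ·σz)`. -/
def UB (β : ℝ) : Matrix (Fin 2) (Fin 2) ℂ :=
  NormedSpace.exp ((-2 * β * Complex.I) • σz)

/-- `U_C(γ,θ) = exp(−2iγ·n(θ))`. -/
def UC (γ θ : ℝ) : Matrix (Fin 2) (Fin 2) ℂ :=
  NormedSpace.exp ((-2 * γ * Complex.I) • nvec θ)

/-- The level-`p` QAOA circuit `U(γ,β,θ) = U_B(β_p)·U_C(γ_p,θ)·⋯·U_B(β_1)·U_C(γ_1,θ)`. -/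
def Uqaoa (p : ℕ) (γ β : Fin p → ℝ) (θ : ℝ) : Matrix (Fin 2) (Fin 2) ℂ :=
  ((List.ofFn fun i : Fin p => UB (β i) * UC (γ i) θ).reverse).prod

/-- The pseudospin expectation `F(γ,β,θ) = Re tr[n(θ)·U·σz·U†]`. -/
def Fps (p : ℕ) (γ β : Fin p → ℝ) (θ : ℝ) : ℝ :=
  (Matrix.trace (nvec θ * Uqaoa p γ β θ * σz * (Uqaoa p γ β θ)ᴴ)).re

end

/-! Both generators are exponentials of involutions, `σz² = n(θ)² = 1`. For an involution `A`,
`exp (z • A) = cosh z + sinh z • A`, so `exp (-kπi • A) = (-1)^k` and shifting an angle by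
`π/2 · k` multiplies `U_B` or `U_C` by the sign `(-1)^k`. Hence the circuit `U` only changes by a
global phase, which cancels in `U σz U†`. -/

open NormedSpace

section Involution

variable {𝔸 : Type*} [Ring 𝔸] [Algebra ℂ 𝔸] [TopologicalSpace 𝔸]
  [IsTopologicalRing 𝔸] [ContinuousSMul ℂ 𝔸] [T2Space 𝔸]

theorem exp_smul_of_mul_self_eq_one {A : 𝔸} (hA : A * A = 1) (z : ℂ) :
    exp (z • A) = Complex.cosh z • (1 : 𝔸) + Complex.sinh z • A := by
  rw [exp_eq_tsum ℂ]
  refine HasSum.tsum_eq (HasSum.even_add_odd ?_ ?_)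
  · convert (Complex.hasSum_cosh z).smul_const (1 : 𝔸) using 2 with n
    rw [smul_pow, pow_mul A, sq, hA, one_pow, smul_smul, div_eq_inv_mul]
  · convert (Complex.hasSum_sinh z).smul_const A using 2 with n
    rw [smul_pow, pow_succ A, pow_mul A, sq, hA, one_pow, one_mul, smul_smul, div_eq_inv_mul]

theorem exp_int_mul_pi_I_smul_of_mul_self_eq_one {A : 𝔸} (hA : A * A = 1) (k : ℤ) :
    exp (((k : ℂ) * π * I) • A) = ((-1 : ℂ) ^ k) • (1 : 𝔸) := by
  have hcos : Complex.cos (k * π) = (-1) ^ k := by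
    simpa using congrArg ((↑) : ℝ → ℂ) (Real.cos_int_mul_pi k)
  rw [exp_smul_of_mul_self_eq_one hA, Complex.cosh_mul_I, Complex.sinh_mul_I, hcos,
    Complex.sin_int_mul_pi, zero_mul, zero_smul, add_zero]

end Involution

theorem Matrix.exp_sub_int_mul_pi_I_smul_of_mul_self_eq_one {m : Type*} [Fintype m]
    [DecidableEq m] {A : Matrix m m ℂ} (hA : A * A = 1) (z : ℂ) (k : ℤ) :
    exp ((z - k * π * I) • A) = ((-1 : ℂ) ^ k) • exp (z • A) := by
  have hk : z - k * π * I = z + ((-k : ℤ) : ℂ) * π * I := by push_cast; ring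
  rw [hk, add_smul, Matrix.exp_add_of_commute _ _ (((Commute.refl A).smul_left _).smul_right _),
    exp_int_mul_pi_I_smul_of_mul_self_eq_one hA, mul_smul_comm, mul_one,
    ← _root_.inv_zpow', inv_neg_one]

theorem List.prod_map_smul {ι R M : Type*} [CommMonoid R] [Monoid M] [MulAction R M]
    [IsScalarTower R M M] [SMulCommClass R M M] (l : List ι) (c : ι → R) (f : ι → M) :
    (l.map fun i => c i • f i).prod = (l.map c).prod • (l.map f).prod := by
  induction l with
  | nil => simp
  | cons i l ih => simp only [List.map_cons, List.prod_cons, ih, smul_mul_smul_comm]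

theorem neg_one_zpow_mem_unitary {K : Type*} [Field K] [StarRing K] (k : ℤ) :
    (-1 : K) ^ k ∈ unitary K := by
  rw [Unitary.mem_iff_star_mul_self, star_zpow₀, star_neg, star_one, ← mul_zpow, neg_one_mul,
    neg_neg, _root_.one_zpow]

theorem Matrix.smul_mul_mul_conjTranspose_smul {n R : Type*} [Fintype n] [CommRing R]
    [StarRing R] {c : R} (hc : c ∈ unitary R) (U Y : Matrix n n R) :
    c • U * (Y * (c • U)ᴴ) = U * (Y * Uᴴ) := by
  rw [conjTranspose_smul, mul_smul_comm, smul_mul_smul_comm, Unitary.mul_star_self_of_mem hc,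
    one_smul]

theorem σz_mul_self : σz * σz = 1 := by
  simp [σz, Matrix.one_fin_two]

theorem nvec_mul_self (θ : ℝ) : nvec θ * nvec θ = 1 := by
  ext i j
  fin_cases i <;> fin_cases j <;>
    simp [nvec, σx, σz, Matrix.mul_apply, Fin.sum_univ_two, mul_comm, ← sq]

theorem UB_add_pi_div_two_mul (β : ℝ) (k : ℤ) : UB (β + π / 2 * k) = ((-1 : ℂ) ^ k) • UB β := by
  have h : -2 * ((β + π / 2 * k : ℝ) : ℂ) * I = -2 * β * I - k * π * I := by push_cast; ring
  rw [UB, UB, h, Matrix.exp_sub_int_mul_pi_I_smul_of_mul_self_eq_one σz_mul_self]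

theorem UC_add_pi_div_two_mul (γ θ : ℝ) (k : ℤ) :
    UC (γ + π / 2 * k) θ = ((-1 : ℂ) ^ k) • UC γ θ := by
  have h : -2 * ((γ + π / 2 * k : ℝ) : ℂ) * I = -2 * γ * I - k * π * I := by push_cast; ring
  rw [UC, UC, h, Matrix.exp_sub_int_mul_pi_I_smul_of_mul_self_eq_one (nvec_mul_self θ)]

theorem Uqaoa_add_pi_div_two_mul (p : ℕ) (γ β : Fin p → ℝ) (l l' : Fin p → ℤ) (θ : ℝ) :
    Uqaoa p (fun i => γ i + π / 2 * l i) (fun i => β i + π / 2 * l' i) θ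
      = (∏ i, (-1 : ℂ) ^ l' i * (-1 : ℂ) ^ l i) • Uqaoa p γ β θ := by
  simp only [Uqaoa, UB_add_pi_div_two_mul, UC_add_pi_div_two_mul, smul_mul_smul_comm,
    List.ofFn_eq_map, ← List.map_reverse, List.prod_map_smul]
  rw [List.map_reverse, List.prod_reverse, ← List.ofFn_eq_map, List.prod_ofFn]

theorem pseudospin_periodicity_general
    (p : ℕ) (γ β : Fin p → ℝ) (l l' : Fin p → ℤ) (θ : ℝ) :
    Fps p (fun i => γ i + (Real.pi / 2) * l i) (fun i => β i + (Real.pi / 2) * l' i) θ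
      = Fps p γ β θ := by
  have hsign : ∏ i, (-1 : ℂ) ^ l' i * (-1 : ℂ) ^ l i ∈ unitary ℂ :=
    prod_mem fun i _ => mul_mem (neg_one_zpow_mem_unitary _) (neg_one_zpow_mem_unitary _)
  simp only [Fps, Uqaoa_add_pi_div_two_mul, Matrix.mul_assoc,
    Matrix.smul_mul_mul_conjTranspose_smul hsign]

/-- The pseudospin expectation is periodic with period `π/2` in every angle. -/
theorem pseudospin_periodicity
    (p : ℕ) (hp : 1 ≤ p) (γ β : Fin p → ℝ) (l l' : Fin p → ℤ) (θ : ℝ) :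
    Fps p (fun i => γ i + (Real.pi / 2) * l i) (fun i => β i + (Real.pi / 2) * l' i) θ
      = Fps p γ β θ :=
  pseudospin_periodicity_general p γ β l l' θ
end

section
/- With R(θ) = cos(θ/2)·σz + sin(θ/2)·σx, for all γ, β ∈ ℝ^p and all θ ∈ ℝ, conjugation by R reverses and exchanges the QAOA angle sequence: R(θ)·U(γ, β, θ)·R(θ) = (U(−β′, −γ′, θ))†, where γ′ = (γ_p, …, γ_1) and β′ = (β_p, …, β_1). -/
/-!
`R(θ)` is a reflection: `R² = 1` and conjugation by `R` swaps `σz` and `n(θ)` (a half-angle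
computation). Hence it swaps the exponentials `U_B(t)` and `U_C(t, θ)`, turning each layer
`U_B(β_k)·U_C(γ_k)` into `U_C(β_k)·U_B(γ_k) = (U_B(−γ_k)·U_C(−β_k))†`, since both generators
are Hermitian. Taking the adjoint of a product reverses its order, which reverses the angle
sequences.
-/

open Matrix Complex Real

noncomputable section

/-- The rotation `R(θ) = cos(θ/2)·σz + sin(θ/2)·σx`. -/
def Rrot (θ : ℝ) : Matrix (Fin 2) (Fin 2) ℂ :=
  (Real.cos (θ / 2) : ℂ) • σz + (Real.sin (θ / 2) : ℂ) • σx

section Involution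

variable {M : Type*} [Monoid M] {r : M}

theorem mul_mul_mul_of_mul_self_eq_one (hr : r * r = 1) (a b : M) :
    r * (a * b) * r = (r * a * r) * (r * b * r) := by
  simp only [mul_assoc, ← mul_assoc r r, hr, one_mul]

theorem List.mul_prod_mul_of_mul_self_eq_one (hr : r * r = 1) (l : List M) :
    r * l.prod * r = (l.map (r * · * r)).prod := by
  induction l with
  | nil => simpa using hr
  | cons a l ih => rw [List.map_cons, List.prod_cons, List.prod_cons, ← ih,
      mul_mul_mul_of_mul_self_eq_one hr]

end Involution

theorem List.reverse_ofFn {α : Type*} {n : ℕ} (f : Fin n → α) :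
    (List.ofFn f).reverse = List.ofFn (f ∘ Fin.rev) := by
  simp only [List.ofFn_eq_map, ← List.map_reverse, List.finRange_reverse, List.map_map]

theorem Matrix.mul_exp_mul_of_mul_self_eq_one {m 𝔸 : Type*} [Fintype m] [DecidableEq m]
    [NormedRing 𝔸] [NormedAlgebra ℚ 𝔸] [CompleteSpace 𝔸] {R : Matrix m m 𝔸} (hR : R * R = 1)
    (A : Matrix m m 𝔸) : R * NormedSpace.exp A * R = NormedSpace.exp (R * A * R) :=
  (Matrix.exp_units_conj ⟨R, R, hR, hR⟩ A).symm

theorem Matrix.IsHermitian.conjTranspose_exp_smul {m 𝕜 : Type*} [Fintype m] [DecidableEq m]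
    [RCLike 𝕜] {A : Matrix m m 𝕜} (hA : A.IsHermitian) (c : 𝕜) :
    (NormedSpace.exp (c • A))ᴴ = NormedSpace.exp (star c • A) := by
  rw [← exp_conjTranspose, conjTranspose_smul, hA.eq]

theorem σz_isHermitian : σz.IsHermitian := by
  ext i j
  fin_cases i <;> fin_cases j <;> simp [σz]

theorem nvec_isHermitian (θ : ℝ) : (nvec θ).IsHermitian := by
  ext i j
  fin_cases i <;> fin_cases j <;> simp [nvec, σz, σx, -Complex.ofReal_cos, -Complex.ofReal_sin]

theorem Rrot_mul_self (θ : ℝ) : Rrot θ * Rrot θ = 1 := by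
  have h := Complex.cos_sq_add_sin_sq (θ / 2)
  ext i j
  fin_cases i <;> fin_cases j <;> simp [Rrot, σz, σx, mul_apply, Fin.sum_univ_two] <;> grind

theorem Rrot_mul_σz_mul_Rrot (θ : ℝ) : Rrot θ * σz * Rrot θ = nvec θ := by
  have hc : Complex.cos θ = Complex.cos (θ / 2) ^ 2 - Complex.sin (θ / 2) ^ 2 := by
    rw [← Complex.cos_two_mul', mul_div_cancel₀ _ two_ne_zero]
  have hs : Complex.sin θ = 2 * Complex.sin (θ / 2) * Complex.cos (θ / 2) := by
    rw [← Complex.sin_two_mul, mul_div_cancel₀ _ two_ne_zero]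
  ext i j
  fin_cases i <;> fin_cases j <;>
    simp [Rrot, nvec, σz, σx, mul_apply, Fin.sum_univ_two] <;> grind

theorem UB_conjTranspose (β : ℝ) : (UB β)ᴴ = UB (-β) := by
  rw [UB, σz_isHermitian.conjTranspose_exp_smul, UB]
  congr 1
  simp

theorem UC_conjTranspose (γ θ : ℝ) : (UC γ θ)ᴴ = UC (-γ) θ := by
  rw [UC, (nvec_isHermitian θ).conjTranspose_exp_smul, UC]
  congr 1
  simp

theorem Rrot_mul_nvec_mul_Rrot (θ : ℝ) : Rrot θ * nvec θ * Rrot θ = σz := by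
  rw [← Rrot_mul_σz_mul_Rrot]
  simp only [mul_assoc, Rrot_mul_self, mul_one, ← mul_assoc (Rrot θ) (Rrot θ), one_mul]

theorem Rrot_mul_UB_mul_Rrot (β θ : ℝ) : Rrot θ * UB β * Rrot θ = UC β θ := by
  rw [UB, mul_exp_mul_of_mul_self_eq_one (Rrot_mul_self θ), mul_smul_comm, smul_mul_assoc,
    Rrot_mul_σz_mul_Rrot, UC]

theorem Rrot_mul_UC_mul_Rrot (γ θ : ℝ) : Rrot θ * UC γ θ * Rrot θ = UB γ := by
  rw [UC, mul_exp_mul_of_mul_self_eq_one (Rrot_mul_self θ), mul_smul_comm, smul_mul_assoc,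
    Rrot_mul_nvec_mul_Rrot, UB]

theorem Rrot_mul_layer_mul_Rrot (γ β θ : ℝ) :
    Rrot θ * (UB β * UC γ θ) * Rrot θ = (UB (-γ) * UC (-β) θ)ᴴ := by
  rw [mul_mul_mul_of_mul_self_eq_one (Rrot_mul_self θ), Rrot_mul_UB_mul_Rrot,
    Rrot_mul_UC_mul_Rrot, conjTranspose_mul, UB_conjTranspose, UC_conjTranspose, neg_neg, neg_neg]

theorem conjugation_reverses_and_exchanges_angles_general
    (p : ℕ) (γ β : Fin p → ℝ) (θ : ℝ) :
    Rrot θ * Uqaoa p γ β θ * Rrot θ =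
      (Uqaoa p (fun i => -β (Fin.rev i)) (fun i => -γ (Fin.rev i)) θ)ᴴ := by
  rw [Uqaoa, Uqaoa, List.mul_prod_mul_of_mul_self_eq_one (Rrot_mul_self θ),
    conjTranspose_list_prod, List.map_reverse, List.map_reverse, List.reverse_reverse,
    List.map_ofFn, List.map_ofFn, List.reverse_ofFn]
  congr 2
  exact funext fun i => Rrot_mul_layer_mul_Rrot _ _ θ

/-- Conjugation by `R(θ)` reverses and exchanges the QAOA angle sequence:
`R·U(γ,β,θ)·R = (U(−β′,−γ′,θ))†`. -/
theorem conjugation_reverses_and_exchanges_angles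
    (p : ℕ) (hp : 1 ≤ p) (γ β : Fin p → ℝ) (θ : ℝ) :
    Rrot θ * Uqaoa p γ β θ * Rrot θ =
      (Uqaoa p (fun i => -β (Fin.rev i)) (fun i => -γ (Fin.rev i)) θ)ᴴ :=
  conjugation_reverses_and_exchanges_angles_general p γ β θ
end
end
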